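/- In the NUCA H_θ on Σ = {0,1,2,3} with θ(x)=id for x≤0 and θ(x)=f for x>0 (f as below): if c is a configuration with positions 0 ≤ x₁ < x₂ such that c(x₁) ≠ 1, c(x₂) = 2, and c(x) = 1 for all x₁ < x < x₂, then H_θ^{x₂−x₁}(c)(x₂) = 0. -/

import Mathlib

open Function

/-- `f` is a local rule of radius (at most) `r`: it only depends on coordinates in `[-r, r]`. -/
def IsLocalRule {A : Type*} (r : ℕ) (f : (ℤ → A) → A) : Prop :=
  ∀ u v : ℤ → A, (∀ i : ℤ, -(r : ℤ) ≤ i → i ≤ (r : ℤ) → u i = v i) → f u = f v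

/-- The global map of the non-uniform cellular automaton with rule distribution `θ`. -/
def nuca {A : Type*} (θ : ℤ → ((ℤ → A) → A)) (c : ℤ → A) : ℤ → A :=
  fun x => θ x (fun i => c (x + i))

/-- A configuration `θ : ℤ → R` is (spatially) recurrent: every finite pattern
occurs in some other (translated) position. -/
def Recurrent {R : Type*} (θ : ℤ → R) : Prop :=
  ∀ (a : ℤ) (m : ℕ), ∃ k : ℤ, k ≠ 0 ∧ ∀ i : ℕ, i < m → θ (a + k + i) = θ (a + i)

/-- A configuration `θ : ℤ → R` is (spatially) uniformly recurrent: every finite pattern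
occurs with bounded gaps. -/
def UnifRecurrent {R : Type*} (θ : ℤ → R) : Prop :=
  ∀ (a : ℤ) (m : ℕ), ∃ n : ℕ, ∀ x : ℤ, ∃ k : ℤ, x ≤ k ∧ k ≤ x + (n : ℤ) ∧
    ∀ i : ℕ, i < m → θ (k + i) = θ (a + i)

/-- `φ` lies in the orbit closure of `θ` under the shift (combinatorial characterization:
every finite pattern of `φ` occurs in `θ`). -/
def InOrbitClosure {R : Type*} (φ θ : ℤ → R) : Prop :=
  ∀ (a : ℤ) (m : ℕ), ∃ k : ℤ, ∀ i : ℕ, i < m → φ (a + i) = θ (a + k + i)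

/-- The radius-`r` neighbourhood of a finite domain `D`. -/
noncomputable def nbhd (r : ℕ) (D : Finset ℤ) : Finset ℤ :=
  D.biUnion (fun x => Finset.Icc (x - (r : ℤ)) (x + (r : ℤ)))

/-- A NUCA (with radius-`r` rules) is balanced: every pattern on a finite domain `D` has
exactly `|Σ|^(|N(D)|-|D|)` preimage patterns on the neighbourhood `N(D)`. -/
def NucaBalanced {A : Type*} [Fintype A] (r : ℕ) (θ : ℤ → ((ℤ → A) → A)) : Prop :=
  ∀ (D : Finset ℤ) (p : ℤ → A),
    Nat.card {q : { y : ℤ // y ∈ nbhd r D } → A //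
      ∀ c : ℤ → A, (∀ i : { y : ℤ // y ∈ nbhd r D }, c i.1 = q i) →
        ∀ x ∈ D, nuca θ c x = p x} =
      Fintype.card A ^ ((nbhd r D).card - D.card)

/-- `c` is an equicontinuity point of the NUCA `θ`. -/
def EqPt {A : Type*} (θ : ℤ → ((ℤ → A) → A)) (c : ℤ → A) : Prop :=
  ∀ E : Finset ℤ, ∃ D : Finset ℤ, ∀ e : ℤ → A, (∀ x ∈ D, e x = c x) →
    ∀ n : ℕ, 1 ≤ n → ∀ x ∈ E, (nuca θ)^[n] e x = (nuca θ)^[n] c x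

/-- The NUCA `θ` is sensitive to initial conditions. -/
def Sensitive {A : Type*} (θ : ℤ → ((ℤ → A) → A)) : Prop :=
  ∃ E : Finset ℤ, ∀ c : ℤ → A, ∀ D : Finset ℤ, ∃ e : ℤ → A,
    (∀ x ∈ D, e x = c x) ∧ ∃ n : ℕ, 1 ≤ n ∧ ∃ x ∈ E, (nuca θ)^[n] e x ≠ (nuca θ)^[n] c x


/-- The radius-1 rule f on the alphabet {0,1,2,3}. -/
def f18 : (ℤ → Fin 4) → Fin 4 := fun u =>
  if u 0 = 0 ∧ u 1 = 3 then 3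
  else if u (-1) = 1 ∧ u 0 = 1 ∧ u 1 = 1 then 1
  else if u (-1) = 1 ∧ u 0 = 1 ∧ u 1 = 2 then 1
  else if u 0 = 1 ∧ u 1 = 3 then 3
  else if u (-1) = 1 ∧ u 0 = 2 then 2
  else if u 0 = 3 ∧ u 1 = 3 then 3
  else 0

/-- The identity rule on {0,1,2,3}. -/
def idRule4 : (ℤ → Fin 4) → Fin 4 := fun u => u 0

/-- f on the positive cells, identity on the nonpositive cells. -/
def θ18 : ℤ → ((ℤ → Fin 4) → Fin 4) := fun x => if 0 < x then f18 else idRule4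

/-! On positive cells `f18` turns a `1` whose left neighbour is not `1` into `0`, and keeps a `1`
or `2` whose left neighbour is `1`; so the hole moves one cell right per step while the `1`s
ahead of it and the `2` stay put. After `x₂ - x₁ - 1` steps the hole sits next to the `2`, which
then becomes `0`. -/

section θ18

variable {c : ℤ → Fin 4} {x : ℤ}

lemma nuca_θ18_apply_of_pos (hx : 0 < x) : nuca θ18 c x = f18 (fun i => c (x + i)) := by
  simp [nuca, θ18, hx]

lemma nuca_θ18_eq_zero_of_two (hx : 0 < x) (hl : c (x - 1) ≠ 1) (hc : c x = 2) :
    nuca θ18 c x = 0 := by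
  simp [nuca_θ18_apply_of_pos hx, f18, ← sub_eq_add_neg, hl, hc]

lemma nuca_θ18_eq_zero_of_one (hx : 0 < x) (hl : c (x - 1) ≠ 1) (hc : c x = 1)
    (hr : c (x + 1) = 1 ∨ c (x + 1) = 2) : nuca θ18 c x = 0 := by
  rcases hr with hr | hr <;> simp [nuca_θ18_apply_of_pos hx, f18, ← sub_eq_add_neg, hl, hc, hr]

lemma nuca_θ18_eq_one (hx : 0 < x) (hl : c (x - 1) = 1) (hc : c x = 1)
    (hr : c (x + 1) = 1 ∨ c (x + 1) = 2) : nuca θ18 c x = 1 := by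
  rcases hr with hr | hr <;> simp [nuca_θ18_apply_of_pos hx, f18, ← sub_eq_add_neg, hl, hc, hr]

lemma nuca_θ18_eq_two (hx : 0 < x) (hl : c (x - 1) = 1) (hc : c x = 2) :
    nuca θ18 c x = 2 := by
  simp [nuca_θ18_apply_of_pos hx, f18, ← sub_eq_add_neg, hl, hc]

end θ18

structure HoleBeforeTwo (c : ℤ → Fin 4) (x₁ x₂ : ℤ) : Prop where
  hole : c x₁ ≠ 1
  two : c x₂ = 2
  one : ∀ x, x₁ < x → x < x₂ → c x = 1

namespace HoleBeforeTwo

variable {c : ℤ → Fin 4} {x₁ x₂ : ℤ}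

lemma one_or_two (h : HoleBeforeTwo c x₁ x₂) {x : ℤ} (hl : x₁ < x) (hr : x ≤ x₂) :
    c x = 1 ∨ c x = 2 := by
  rcases hr.lt_or_eq with hr | rfl
  · exact .inl (h.one x hl hr)
  · exact .inr h.two

lemma nuca_θ18 (h : HoleBeforeTwo c x₁ x₂) (h0 : 0 ≤ x₁) (h12 : x₁ + 1 < x₂) :
    HoleBeforeTwo (nuca θ18 c) (x₁ + 1) x₂ where
  hole := by
    rw [nuca_θ18_eq_zero_of_one (by omega) (by simpa using h.hole) (h.one _ (by omega) h12)
      (h.one_or_two (by omega) (by omega))]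
    decide
  two := nuca_θ18_eq_two (by omega) (h.one _ (by omega) (by omega)) h.two
  one x hl hr := nuca_θ18_eq_one (by omega) (h.one _ (by omega) (by omega))
    (h.one _ (by omega) hr) (h.one_or_two (by omega) (by omega))

lemma iterate_nuca_θ18 (h : HoleBeforeTwo c x₁ x₂) (h0 : 0 ≤ x₁) (n : ℕ) (hn : x₁ + n < x₂) :
    HoleBeforeTwo ((nuca θ18)^[n] c) (x₁ + n) x₂ := by
  induction n with
  | zero => simpa using h
  | succ n ih =>
    rw [iterate_succ_apply']
    push_cast
    rw [← add_assoc]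
    exact (ih (by omega)).nuca_θ18 (by omega) (by omega)

lemma nuca_θ18_eq_zero (h : HoleBeforeTwo c x₁ x₂) (h0 : 0 ≤ x₁) (h12 : x₁ + 1 = x₂) :
    nuca θ18 c x₂ = 0 :=
  nuca_θ18_eq_zero_of_two (by omega) (by simpa [← h12] using h.hole) h.two

end HoleBeforeTwo

/-- If `0 ≤ x₁ < x₂`, `c x₁ ≠ 1`, `c x₂ = 2` and `c` is 1 strictly between `x₁` and
`x₂`, then after `x₂ - x₁` steps the cell `x₂` holds 0. -/
theorem stmt_18 (c : ℤ → Fin 4) (x₁ x₂ : ℤ) (h0 : 0 ≤ x₁) (h12 : x₁ < x₂)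
    (h1 : c x₁ ≠ 1) (h2 : c x₂ = 2) (hmid : ∀ x : ℤ, x₁ < x → x < x₂ → c x = 1) :
    (nuca θ18)^[(x₂ - x₁).toNat] c x₂ = 0 := by
  set n := (x₂ - x₁).toNat - 1
  have hn : (x₂ - x₁).toNat = n + 1 := by omega
  rw [hn, iterate_succ_apply']
  exact (HoleBeforeTwo.mk h1 h2 hmid |>.iterate_nuca_θ18 h0 n (by omega)).nuca_θ18_eq_zero
    (by omega) (by omega)
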